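/- arXiv:2405.17360 — 4 statements merged into one kernel-verified Lean document; each statement's English description precedes it below -/
import Mathlib

section
/- Let T ⊆ Γ be a transversal for the cosets of Z in Γ (so that Γ is the disjoint union of the cosets tZ for t ∈ T), and write an arbitrary element x ∈ ℂ[Γ] as x = Σ_{t∈T} Σ_{z∈Z} a_{t,z}·(tz) with a_{t,z} ∈ ℂ. Then tr_χ(x* x) = Σ_{t∈T} |Σ_{z∈Z} a_{t,z}·χ(z)|². In particular, tr_χ(x* x) is a nonnegative real number for every x ∈ ℂ[Γ]. -/
open scoped ComplexConjugate

/-- The star operation on the complex group algebra `ℂ[Γ]`, determined by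
`(a·g)* = conj(a)·g⁻¹`. -/
noncomputable def groupAlgebraStar {Γ : Type*} [Group Γ] (x : MonoidAlgebra ℂ Γ) :
    MonoidAlgebra ℂ Γ :=
  MonoidAlgebra.ofCoeff
    (Finsupp.mapDomain (fun g => g⁻¹) (Finsupp.mapRange (starRingEnd ℂ) (map_zero _) x.coeff))

/-- The twisted trace `tr_χ : ℂ[Γ] → ℂ` associated to a character `χ : Z → ℂˣ` of a finite
central subgroup `Z ≤ Γ`: it is `ℂ`-linear with `tr_χ(g) = χ(g)` for `g ∈ Z` and
`tr_χ(g) = 0` for `g ∉ Z`; explicitly `tr_χ(x) = Σ_{z ∈ Z} x(z)·χ(z)`. -/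
noncomputable def twistedTrace {Γ : Type*} [Group Γ] (Z : Subgroup Γ) [Fintype Z]
    (χ : Z →* ℂˣ) (x : MonoidAlgebra ℂ Γ) : ℂ :=
  ∑ z : Z, x.coeff ↑z * (χ z : ℂ)

/-! Expanding the convolution, `tr_χ(x* x) = Σ_a x(a) Σ_{z∈Z} conj(x(a z⁻¹)) χ(z)`. Writing
`a = t w` with `t ∈ T`, `w ∈ Z` groups this sum by cosets `tZ`. Since `χ` has finite order its
values lie on the unit circle, so `conj χ(u) = χ(u⁻¹)`, and the substitution `z = u⁻¹ w` factors
the contribution of each coset as `|Σ_{u∈Z} x(tu) χ(u)|²`. -/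

lemma groupAlgebraStar_coeff {Γ : Type*} [Group Γ] (x : MonoidAlgebra ℂ Γ) (g : Γ) :
    (groupAlgebraStar x).coeff g = conj (x.coeff g⁻¹) := by
  rw [groupAlgebraStar, MonoidAlgebra.coeff_ofCoeff, ← inv_inv g,
    Finsupp.mapDomain_apply inv_injective, inv_inv, Finsupp.mapRange_apply]

lemma coeff_groupAlgebraStar_mul {Γ : Type*} [Group Γ] (x y : MonoidAlgebra ℂ Γ) (g : Γ) :
    (groupAlgebraStar x * y).coeff g = ∑ᶠ a, conj (x.coeff (a * g⁻¹)) * y.coeff a := by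
  rw [MonoidAlgebra.coeff_mul_apply_right, Finsupp.sum,
    finsum_eq_sum_of_support_subset _ fun a ha =>
      Finsupp.mem_support_iff.2 (right_ne_zero_of_mul (Function.mem_support.1 ha))]
  simp only [groupAlgebraStar_coeff, mul_inv_rev, inv_inv]

lemma MonoidHom.conj_coe_apply {G : Type*} [Group G] [Finite G] (χ : G →* ℂˣ) (g : G) :
    conj (χ g : ℂ) = χ g⁻¹ := by
  have hpow : (χ g : ℂ) ^ Nat.card G = 1 := by
    rw [← Units.val_pow_eq_pow_val, ← map_pow, pow_card_eq_one', map_one, Units.val_one]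
  rw [map_inv, Units.val_inv_eq_inv_val,
    Complex.inv_eq_conj (Complex.norm_eq_one_of_pow_eq_one hpow Nat.card_pos.ne')]

lemma Subgroup.IsComplement.finsum_eq_finsum_sum {Γ M : Type*} [Group Γ] [AddCommMonoid M]
    {T : Set Γ} {H : Subgroup Γ} [Fintype H] (hT : Subgroup.IsComplement T H) {f : Γ → M}
    (hf : Function.HasFiniteSupport f) :
    ∑ᶠ g, f g = ∑ᶠ t : T, ∑ h : H, f (t * h) := by
  rw [← finsum_comp_equiv hT.equiv.symm,
    finsum_curry _ (hf.preimage hT.equiv.symm.injective.injOn)]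
  exact finsum_congr fun t => finsum_eq_sum_of_fintype _

lemma sum_mul_sum_conj_mul_eq_normSq {H : Type*} [Group H] [Fintype H] (χ : H →* ℂˣ)
    (c : H → ℂ) :
    ∑ w, c w * ∑ z, conj (c (w * z⁻¹)) * χ z = Complex.normSq (∑ z, c z * χ z) := by
  have hinner : ∀ w, ∑ z, conj (c (w * z⁻¹)) * χ z = χ w * ∑ u, conj (c u * χ u) := by
    intro w
    rw [Finset.mul_sum]
    refine (Fintype.sum_equiv ((Equiv.inv H).trans (Equiv.mulRight w)) _ _ fun u => ?_).symm
    simp only [Equiv.trans_apply, Equiv.inv_apply, Equiv.coe_mulRight, mul_inv_rev, inv_inv,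
      mul_inv_cancel_left, map_mul, MonoidHom.conj_coe_apply, Units.val_mul]
    ring
  simp_rw [hinner, ← mul_assoc, ← Finset.sum_mul, Complex.normSq_eq_conj_mul_self, map_sum,
    mul_comm]

theorem twistedTrace_groupAlgebraStar_mul_self {Γ : Type*} [Group Γ] (Z : Subgroup Γ) [Fintype Z]
    (χ : Z →* ℂˣ) {T : Set Γ} (hT : Subgroup.IsComplement T (Z : Set Γ)) (x : MonoidAlgebra ℂ Γ) :
    twistedTrace Z χ (groupAlgebraStar x * x) =
      ((∑ᶠ t : T, Complex.normSq (∑ z : Z, x.coeff ((t : Γ) * (z : Γ)) * (χ z : ℂ))) : ℝ) := by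
  have hfin : ∀ f : Γ → ℂ, Function.HasFiniteSupport fun a => x.coeff a * f a := fun f =>
    x.coeff.hasFiniteSupport.subset (Function.support_mul_subset_left _ _)
  calc twistedTrace Z χ (groupAlgebraStar x * x)
      = ∑ z : Z, ∑ᶠ a, x.coeff a * (conj (x.coeff (a * (z : Γ)⁻¹)) * χ z) := by
        simp only [twistedTrace, coeff_groupAlgebraStar_mul, finsum_mul, mul_assoc, mul_left_comm]
    _ = ∑ᶠ a, x.coeff a * ∑ z : Z, conj (x.coeff (a * (z : Γ)⁻¹)) * χ z := by
        simp only [Finset.mul_sum]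
        exact (finsum_sum_comm _ _ fun z _ => hfin _).symm
    _ = ∑ᶠ t : T, ∑ w : Z, x.coeff (t * w) * ∑ z : Z, conj (x.coeff (t * w * (z : Γ)⁻¹)) * χ z :=
        hT.finsum_eq_finsum_sum (hfin _)
    _ = ∑ᶠ t : T, (Complex.normSq (∑ z : Z, x.coeff (t * z) * χ z) : ℂ) := finsum_congr fun t => by
        simpa [mul_assoc] using sum_mul_sum_conj_mul_eq_normSq χ fun w => x.coeff (t * w)
    _ = _ :=
        (Complex.ofRealHom.toAddMonoidHom.map_finsum_of_injective Complex.ofReal_injective _).symm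

theorem twistedTrace_star_self_general {Γ : Type*} [Group Γ] (Z : Subgroup Γ)
    [Fintype Z] (χ : Z →* ℂˣ)
    (T : Set Γ) (hT : Subgroup.IsComplement T (Z : Set Γ)) (x : MonoidAlgebra ℂ Γ) :
    twistedTrace Z χ (groupAlgebraStar x * x) =
      ((∑ᶠ t : T, Complex.normSq (∑ z : Z, x.coeff ((t : Γ) * (z : Γ)) * (χ z : ℂ))) : ℝ) ∧
    ∀ y : MonoidAlgebra ℂ Γ, ∃ r : ℝ, 0 ≤ r ∧
      twistedTrace Z χ (groupAlgebraStar y * y) = (r : ℂ) :=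
  ⟨twistedTrace_groupAlgebraStar_mul_self Z χ hT x, fun y =>
    ⟨_, finsum_nonneg fun _ => Complex.normSq_nonneg _,
      twistedTrace_groupAlgebraStar_mul_self Z χ hT y⟩⟩

/-- Let `T ⊆ Γ` be a transversal for the cosets of `Z` in `Γ`, and write
`x ∈ ℂ[Γ]` as `x = Σ_{t∈T} Σ_{z∈Z} a_{t,z}·(tz)` (so that `a_{t,z} = x(tz)`).  Then
`tr_χ(x* x) = Σ_{t∈T} |Σ_{z∈Z} a_{t,z}·χ(z)|²`.  In particular `tr_χ(x* x)` is a
nonnegative real number for every `x ∈ ℂ[Γ]`. -/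
theorem twistedTrace_star_self {Γ : Type*} [Group Γ] (Z : Subgroup Γ)
    (hZ : Z ≤ Subgroup.center Γ) [Fintype Z] (χ : Z →* ℂˣ)
    (T : Set Γ) (hT : Subgroup.IsComplement T (Z : Set Γ)) (x : MonoidAlgebra ℂ Γ) :
    twistedTrace Z χ (groupAlgebraStar x * x) =
      ((∑ᶠ t : T, Complex.normSq (∑ z : Z, x.coeff ((t : Γ) * (z : Γ)) * (χ z : ℂ))) : ℝ) ∧
    ∀ y : MonoidAlgebra ℂ Γ, ∃ r : ℝ, 0 ≤ r ∧
      twistedTrace Z χ (groupAlgebraStar y * y) = (r : ℂ) :=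
  twistedTrace_star_self_general Z χ T hT x
end

section
/- The set N = { x ∈ ℂ[Γ] : tr_χ(x* x) = 0 } is equal to the two-sided ideal of ℂ[Γ] generated by the elements z − χ(z)·1 for z ∈ Z. -/
/-!
Put `e = |Z|⁻¹ • ∑_{z ∈ Z} χ(z)⁻¹ z`. Since `z e = χ(z) e`, `e` is an idempotent, central because
`Z` is, and self-adjoint because `χ` takes values in the unit circle. Writing `τ(a)` for the
coefficient of `1`, one has `tr_χ(a) = |Z| τ(a e)`, so by traciality of `τ`,
`tr_χ(x* x) = |Z| τ((x e)* (x e)) = |Z| ∑_g |(x e)(g)|²`, and `N = {x | x e = 0}`.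
The generators `z - χ(z)` annihilate `e`, and `1 - e` is a linear combination of them,
so `x = x (1 - e)` lies in the ideal they generate whenever `x e = 0`.
-/

open MonoidAlgebra

section CharacterIdempotent

variable {k Γ : Type*} [Field k] [Group Γ] (Z : Subgroup Γ) [Fintype Z] (χ : Z →* kˣ)

noncomputable def characterIdempotent : MonoidAlgebra k Γ :=
  (Fintype.card Z : k)⁻¹ • ∑ z : Z, (χ z⁻¹ : k) • of k Γ z

lemma of_mul_characterIdempotent (z : Z) :
    of k Γ z * characterIdempotent Z χ = (χ z : k) • characterIdempotent Z χ := by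
  have reindex : ∑ w : Z, (χ w⁻¹ : k) • of k Γ (z * w : Z)
      = (χ z : k) • ∑ w : Z, (χ w⁻¹ : k) • of k Γ w := by
    rw [Finset.smul_sum]
    exact Fintype.sum_equiv (Equiv.mulLeft z) _ _ fun w => by simp [mul_comm]
  rw [characterIdempotent, mul_smul_comm, smul_comm (χ z : k), ← reindex, Finset.mul_sum]
  simp_rw [mul_smul_comm, Subgroup.coe_mul, map_mul]

lemma of_sub_smul_one_mul_characterIdempotent (z : Z) :
    (of k Γ z - (χ z : k) • 1) * characterIdempotent Z χ = 0 := by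
  rw [sub_mul, of_mul_characterIdempotent, smul_one_mul, sub_self]

lemma commute_characterIdempotent (hZ : Z ≤ Subgroup.center Γ) (a : MonoidAlgebra k Γ) :
    Commute (characterIdempotent Z χ) a :=
  .smul_left (.sum_left _ _ _ fun z _ =>
    .smul_left (of_commute (fun g => Subgroup.mem_center_iff.mp (hZ z.2) g |>.symm) a) _) _

variable [CharZero k]

lemma characterIdempotent_mul_self :
    characterIdempotent Z χ * characterIdempotent Z χ = characterIdempotent Z χ := by
  nth_rw 1 [characterIdempotent]
  simp_rw [smul_mul_assoc, Finset.sum_mul, smul_mul_assoc, of_mul_characterIdempotent, smul_smul,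
    ← Units.val_mul, ← map_mul, inv_mul_cancel, map_one, Units.val_one, one_smul,
    Finset.sum_const, Finset.card_univ, ← Nat.cast_smul_eq_nsmul k, smul_smul]
  rw [inv_mul_cancel₀ (by simp), one_smul]

lemma one_sub_characterIdempotent :
    1 - characterIdempotent Z χ
      = -((Fintype.card Z : k)⁻¹ • ∑ z : Z, (χ z⁻¹ : k) • (of k Γ z - (χ z : k) • 1)) := by
  have hcard : (Fintype.card Z : k) ≠ 0 := by simp
  rw [characterIdempotent]
  simp_rw [smul_sub, Finset.sum_sub_distrib, smul_sub, smul_smul,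
    ← Units.val_mul, ← map_mul, inv_mul_cancel, map_one, Units.val_one, one_smul,
    Finset.sum_const, Finset.card_univ, ← Nat.cast_smul_eq_nsmul k, smul_smul,
    inv_mul_cancel₀ hcard, one_smul, neg_sub]

noncomputable def characterIdeal : TwoSidedIdeal (MonoidAlgebra k Γ) :=
  TwoSidedIdeal.span {y | ∃ z : Z, y = of k Γ z - (χ z : k) • 1}

lemma mem_characterIdeal_iff (hZ : Z ≤ Subgroup.center Γ) (x : MonoidAlgebra k Γ) :
    x ∈ characterIdeal Z χ ↔ x * characterIdempotent Z χ = 0 := by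
  set e := characterIdempotent Z χ
  constructor
  · let annihilator : TwoSidedIdeal (MonoidAlgebra k Γ) :=
      .mk' {x | x * e = 0} (zero_mul e) (fun ha hb => by simp_all [add_mul])
        (fun ha => by simp_all [neg_mul])
        (fun hb => by simp_all [mul_assoc])
        (fun {a b} ha => by
          rw [Set.mem_ofPred_eq, mul_assoc, ← (commute_characterIdempotent Z χ hZ b).eq,
            ← mul_assoc, ha, zero_mul])
    have le_annihilator : characterIdeal Z χ ≤ annihilator := by
      refine TwoSidedIdeal.span_le.mpr ?_
      rintro _ ⟨z, rfl⟩
      simpa [annihilator] using of_sub_smul_one_mul_characterIdempotent Z χ z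
    intro hx
    simpa [annihilator] using le_annihilator hx
  · intro hx
    have smul_mem : ∀ (c : k) {y}, y ∈ characterIdeal Z χ → c • y ∈ characterIdeal Z χ :=
      fun c y hy => by rw [Algebra.smul_def]; exact TwoSidedIdeal.mul_mem_left _ _ _ hy
    have one_sub_mem : 1 - e ∈ characterIdeal Z χ := by
      rw [one_sub_characterIdempotent]
      exact neg_mem <| smul_mem _ <| sum_mem fun z _ =>
        smul_mem _ (TwoSidedIdeal.subset_span ⟨z, rfl⟩)
    simpa [mul_sub, hx] using TwoSidedIdeal.mul_mem_left _ x _ one_sub_mem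

end CharacterIdempotent

lemma MonoidAlgebra.coeff_one_mul_comm {R G : Type*} [CommSemiring R] [Group G]
    (a b : MonoidAlgebra R G) : (a * b).coeff 1 = (b * a).coeff 1 := by
  rw [coeff_mul_apply_left, coeff_mul_apply_right]
  simp only [one_mul, mul_one, mul_comm]

section GroupAlgebraStar

variable {Γ : Type*} [Group Γ]

lemma coeff_groupAlgebraStar (x : MonoidAlgebra ℂ Γ) (g : Γ) :
    (groupAlgebraStar x).coeff g = starRingEnd ℂ (x.coeff g⁻¹) := by
  rw [groupAlgebraStar, coeff_ofCoeff, ← inv_inv g,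
    Finsupp.mapDomain_apply inv_injective, inv_inv, Finsupp.mapRange_apply]

noncomputable def groupAlgebraStarₗ : MonoidAlgebra ℂ Γ →ₗ⋆[ℂ] MonoidAlgebra ℂ Γ where
  toFun := groupAlgebraStar
  map_add' x y := by ext g; simp [coeff_groupAlgebraStar]
  map_smul' c x := by ext g; simp [coeff_groupAlgebraStar]

@[simp]
lemma groupAlgebraStar_zero : groupAlgebraStar (0 : MonoidAlgebra ℂ Γ) = 0 :=
  groupAlgebraStarₗ.map_zero

@[simp]
lemma groupAlgebraStar_add (x y : MonoidAlgebra ℂ Γ) :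
    groupAlgebraStar (x + y) = groupAlgebraStar x + groupAlgebraStar y :=
  groupAlgebraStarₗ.map_add x y

lemma groupAlgebraStar_smul (c : ℂ) (x : MonoidAlgebra ℂ Γ) :
    groupAlgebraStar (c • x) = starRingEnd ℂ c • groupAlgebraStar x :=
  groupAlgebraStarₗ.map_smulₛₗ c x

lemma groupAlgebraStar_sum {ι : Type*} (s : Finset ι) (f : ι → MonoidAlgebra ℂ Γ) :
    groupAlgebraStar (∑ i ∈ s, f i) = ∑ i ∈ s, groupAlgebraStar (f i) :=
  map_sum groupAlgebraStarₗ f s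

lemma groupAlgebraStar_single (g : Γ) (c : ℂ) :
    groupAlgebraStar (single g c) = single g⁻¹ (starRingEnd ℂ c) := by
  classical
  ext h
  rw [coeff_groupAlgebraStar, coeff_single, coeff_single, Finsupp.single_apply,
    Finsupp.single_apply, inv_eq_iff_eq_inv]
  split_ifs <;> simp

lemma groupAlgebraStar_mul (a b : MonoidAlgebra ℂ Γ) :
    groupAlgebraStar (a * b) = groupAlgebraStar b * groupAlgebraStar a := by
  induction a using MonoidAlgebra.induction_linear with
  | zero => simp
  | add a₁ a₂ h₁ h₂ => simp [add_mul, mul_add, *]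
  | single g c =>
    induction b using MonoidAlgebra.induction_linear with
    | zero => simp
    | add b₁ b₂ h₁ h₂ => simp [add_mul, mul_add, *]
    | single h d => simp [groupAlgebraStar_single, single_mul_single, mul_comm]

lemma coeff_one_groupAlgebraStar_mul_self (y : MonoidAlgebra ℂ Γ) :
    (groupAlgebraStar y * y).coeff 1 = ((∑ g ∈ y.coeff.support, ‖y.coeff g‖ ^ 2 : ℝ) : ℂ) := by
  simp [coeff_mul_apply_right, coeff_groupAlgebraStar, Finsupp.sum, Complex.conj_mul']

lemma coeff_one_groupAlgebraStar_mul_self_eq_zero_iff (y : MonoidAlgebra ℂ Γ) :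
    (groupAlgebraStar y * y).coeff 1 = 0 ↔ y = 0 := by
  refine ⟨fun h => ?_, fun h => by simp [h]⟩
  rw [coeff_one_groupAlgebraStar_mul_self, Complex.ofReal_eq_zero,
    Finset.sum_eq_zero_iff_of_nonneg fun _ _ => by positivity] at h
  rw [← coeff_inj, coeff_zero, ← Finsupp.support_eq_empty, Finset.eq_empty_iff_forall_notMem]
  exact fun g hg => Finsupp.mem_support_iff.mp hg (by simpa using h g hg)

end GroupAlgebraStar

lemma MonoidHom.conj_apply_eq_inv {G : Type*} [Group G] [Finite G] (χ : G →* ℂˣ) (g : G) :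
    starRingEnd ℂ (χ g) = (χ g : ℂ)⁻¹ := by
  have hpow : (χ g : ℂ) ^ Nat.card G = 1 := by
    rw [← Units.val_pow_eq_pow_val, ← map_pow, pow_card_eq_one', map_one, Units.val_one]
  exact (Complex.inv_eq_conj (Complex.norm_eq_one_of_pow_eq_one hpow Nat.card_pos.ne')).symm

section TwistedTrace

variable {Γ : Type*} [Group Γ] (Z : Subgroup Γ) [Fintype Z] (χ : Z →* ℂˣ)

lemma groupAlgebraStar_characterIdempotent :
    groupAlgebraStar (characterIdempotent Z χ) = characterIdempotent Z χ := by
  have star_term (z : Z) : groupAlgebraStar ((χ z⁻¹ : ℂ) • of ℂ Γ z)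
      = (χ z⁻¹⁻¹ : ℂ) • of ℂ Γ (z⁻¹ : Z) := by
    rw [groupAlgebraStar_smul, MonoidHom.conj_apply_eq_inv, of_apply, of_apply,
      groupAlgebraStar_single, map_inv, Units.val_inv_eq_inv_val, inv_inv, inv_inv, map_one,
      Subgroup.coe_inv]
  rw [characterIdempotent, groupAlgebraStar_smul, groupAlgebraStar_sum, map_inv₀, map_natCast]
  simp_rw [star_term]
  exact congrArg _ (Fintype.sum_equiv (Equiv.inv Z) _ _ fun z => rfl)

lemma twistedTrace_eq_card_mul_coeff_one_mul_characterIdempotent (a : MonoidAlgebra ℂ Γ) :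
    twistedTrace Z χ a = Fintype.card Z * (a * characterIdempotent Z χ).coeff 1 := by
  have hcard : (Fintype.card Z : ℂ) ≠ 0 := by simp
  have coeff_one : (a * characterIdempotent Z χ).coeff 1
      = (Fintype.card Z : ℂ)⁻¹ * ∑ z : Z, a.coeff (z⁻¹ : Z) * (χ z⁻¹ : ℂ) := by
    simp [characterIdempotent, Finset.mul_sum, coeff_sum, of_apply]
  rw [coeff_one, ← mul_assoc, mul_inv_cancel₀ hcard, one_mul]
  exact Fintype.sum_equiv (Equiv.inv Z) _ _ fun z => by simp

lemma twistedTrace_groupAlgebraStar_mul_self_s3 (x : MonoidAlgebra ℂ Γ) :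
    twistedTrace Z χ (groupAlgebraStar x * x) = Fintype.card Z *
      (groupAlgebraStar (x * characterIdempotent Z χ) * (x * characterIdempotent Z χ)).coeff 1 := by
  set e := characterIdempotent Z χ
  rw [twistedTrace_eq_card_mul_coeff_one_mul_characterIdempotent, groupAlgebraStar_mul,
    groupAlgebraStar_characterIdempotent]
  calc (Fintype.card Z : ℂ) * (groupAlgebraStar x * x * e).coeff 1
      = Fintype.card Z * ((groupAlgebraStar x * x * e) * e).coeff 1 := by
        rw [mul_assoc _ e, characterIdempotent_mul_self]
    _ = Fintype.card Z * (e * groupAlgebraStar x * (x * e)).coeff 1 := by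
        rw [coeff_one_mul_comm]; simp only [mul_assoc]

lemma twistedTrace_groupAlgebraStar_mul_self_eq_zero_iff (x : MonoidAlgebra ℂ Γ) :
    twistedTrace Z χ (groupAlgebraStar x * x) = 0 ↔ x * characterIdempotent Z χ = 0 := by
  rw [twistedTrace_groupAlgebraStar_mul_self_s3, mul_eq_zero, or_iff_right (by simp),
    coeff_one_groupAlgebraStar_mul_self_eq_zero_iff]

end TwistedTrace

/-- The set `N = { x ∈ ℂ[Γ] : tr_χ(x* x) = 0 }` equals the two-sided ideal of
`ℂ[Γ]` generated by the elements `z − χ(z)·1` for `z ∈ Z`. -/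
theorem kernel_twistedTrace_eq_span {Γ : Type*} [Group Γ] (Z : Subgroup Γ)
    (hZ : Z ≤ Subgroup.center Γ) [Fintype Z] (χ : Z →* ℂˣ) :
    {x : MonoidAlgebra ℂ Γ | twistedTrace Z χ (groupAlgebraStar x * x) = 0} =
      (TwoSidedIdeal.span
        {y : MonoidAlgebra ℂ Γ | ∃ z : Z,
          y = MonoidAlgebra.of ℂ Γ (z : Γ) - (χ z : ℂ) • 1} : Set (MonoidAlgebra ℂ Γ)) :=
  Set.ext fun x => (twistedTrace_groupAlgebraStar_mul_self_eq_zero_iff Z χ x).trans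
    (mem_characterIdeal_iff Z χ hZ x).symm
end

section
/- Suppose that the quotient group Γ/Z is ICC, i.e. every conjugacy class of Γ/Z other than that of the identity is infinite. Let a : Γ → ℂ be a function satisfying: (i) a(gz) = χ(z)·a(g) for all g ∈ Γ and z ∈ Z; (ii) a(hgh⁻¹) = a(g) for all g, h ∈ Γ; (iii) the function Γ/Z → ℝ sending the coset gZ to |a(g)|² (well defined by (i), since |χ(z)| = 1 for all z ∈ Z) is summable. Then a(g) = 0 for every g ∈ Γ with g ∉ Z. -/
/-!
Since `χ` takes values in the roots of unity, `|a|²` descends to a function on `Γ/Z`, and by (ii)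
this function is constant on conjugacy classes of `Γ/Z`. A summable function cannot take a nonzero
constant value on an infinite set, so by the ICC condition it vanishes off the identity coset.
-/

theorem Summable.eq_zero_of_forall_eq_of_infinite {α E : Type*} [AddCommGroup E]
    [TopologicalSpace E] [IsTopologicalAddGroup E] [T2Space E] {f : α → E} (hf : Summable f)
    {s : Set α} (hs : s.Infinite) {c : E} (hc : ∀ x ∈ s, f x = c) : c = 0 := by
  have : Infinite s := hs.to_subtype
  have hlim : Filter.Tendsto (fun x : s => f x) Filter.cofinite (nhds 0) :=
    hf.tendsto_cofinite_zero.comp Subtype.val_injective.tendsto_cofinite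
  rw [show (fun x : s => f x) = fun _ => c from funext fun x => hc x x.2] at hlim
  exact tendsto_nhds_unique tendsto_const_nhds hlim

theorem Summable.eq_zero_of_isConj_invariant {G E : Type*} [Group G] [AddCommGroup E]
    [TopologicalSpace E] [IsTopologicalAddGroup E] [T2Space E]
    (hICC : ∀ q : G, q ≠ 1 → {q' : G | IsConj q q'}.Infinite) {f : G → E} (hf : Summable f)
    (hconj : ∀ q q' : G, IsConj q q' → f q' = f q) {q : G} (hq : q ≠ 1) : f q = 0 :=
  hf.eq_zero_of_forall_eq_of_infinite (hICC q hq) fun q' hq' => hconj q q' hq'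

theorem MonoidHom.norm_units_apply_eq_one {G : Type*} [Group G] [Finite G] (χ : G →* ℂˣ)
    (g : G) : ‖((χ g : ℂˣ) : ℂ)‖ = 1 :=
  (Units.isOfFinOrder_val.mpr (χ.isOfFinOrder (isOfFinOrder_of_finite g))).norm_eq_one

section CosetNorm

variable {Γ : Type*} [Group Γ] {Z : Subgroup Γ} {χ : Z →* ℂˣ} {a : Γ → ℂ}

theorem normSq_eq_of_mk_eq [Finite Z] (hi : ∀ (g : Γ) (z : Z), a (g * (z : Γ)) = (χ z : ℂ) * a g)
    {g g' : Γ} (h : (g : Γ ⧸ Z) = g') : Complex.normSq (a g') = Complex.normSq (a g) := by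
  obtain ⟨z, rfl⟩ : ∃ z : Z, g * z = g' :=
    ⟨⟨g⁻¹ * g', QuotientGroup.eq.mp h⟩, by simp⟩
  rw [hi, Complex.normSq_mul, Complex.normSq_eq_norm_sq, χ.norm_units_apply_eq_one, one_pow,
    one_mul]

theorem normSq_out_mk [Finite Z] (hi : ∀ (g : Γ) (z : Z), a (g * (z : Γ)) = (χ z : ℂ) * a g)
    (g : Γ) : Complex.normSq (a (Quotient.out (g : Γ ⧸ Z))) = Complex.normSq (a g) :=
  normSq_eq_of_mk_eq hi (Quotient.out_eq _).symm

theorem normSq_out_isConj_invariant [Finite Z] [Z.Normal]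
    (hi : ∀ (g : Γ) (z : Z), a (g * (z : Γ)) = (χ z : ℂ) * a g)
    (hii : ∀ g h : Γ, a (h * g * h⁻¹) = a g) (q q' : Γ ⧸ Z) (hqq' : IsConj q q') :
    Complex.normSq (a (Quotient.out q')) = Complex.normSq (a (Quotient.out q)) := by
  obtain ⟨c, rfl⟩ := isConj_iff.mp hqq'
  obtain ⟨g, rfl⟩ := QuotientGroup.mk_surjective q
  obtain ⟨h, rfl⟩ := QuotientGroup.mk_surjective c
  rw [← QuotientGroup.mk_mul, ← QuotientGroup.mk_inv, ← QuotientGroup.mk_mul, normSq_out_mk hi,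
    normSq_out_mk hi, hii]

end CosetNorm

theorem icc_invariant_function_supported_on_center_general {Γ : Type*} [Group Γ]
    (Z : Subgroup Γ) [Finite Z] [Z.Normal] (χ : Z →* ℂˣ)
    (hICC : ∀ q : Γ ⧸ Z, q ≠ 1 → {q' : Γ ⧸ Z | IsConj q q'}.Infinite)
    (a : Γ → ℂ)
    (hi : ∀ (g : Γ) (z : Z), a (g * (z : Γ)) = (χ z : ℂ) * a g)
    (hii : ∀ g h : Γ, a (h * g * h⁻¹) = a g)
    (hiii : Summable fun q : Γ ⧸ Z => Complex.normSq (a (Quotient.out q))) :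
    ∀ g : Γ, g ∉ Z → a g = 0 := by
  intro g hg
  have hq : (g : Γ ⧸ Z) ≠ 1 := mt (QuotientGroup.eq_one_iff g).mp hg
  have hzero := hiii.eq_zero_of_isConj_invariant hICC (normSq_out_isConj_invariant hi hii) hq
  rwa [normSq_out_mk hi, Complex.normSq_eq_zero] at hzero

/-- Suppose `Γ/Z` is ICC (every non-identity conjugacy class of `Γ/Z` is
infinite), where `Z` is a finite subgroup of the center of `Γ` and `χ : Z → ℂˣ` is a
character.  If `a : Γ → ℂ` satisfies (i) `a(gz) = χ(z)·a(g)`, (ii) `a(hgh⁻¹) = a(g)`, and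
(iii) the induced function `Γ/Z → ℝ`, `gZ ↦ |a(g)|²`, is summable, then `a(g) = 0` for every
`g ∉ Z`. -/
theorem icc_invariant_function_supported_on_center {Γ : Type*} [Group Γ]
    (Z : Subgroup Γ) [Finite Z] [Z.Normal] (hZ : Z ≤ Subgroup.center Γ) (χ : Z →* ℂˣ)
    (hICC : ∀ q : Γ ⧸ Z, q ≠ 1 → {q' : Γ ⧸ Z | IsConj q q'}.Infinite)
    (a : Γ → ℂ)
    (hi : ∀ (g : Γ) (z : Z), a (g * (z : Γ)) = (χ z : ℂ) * a g)
    (hii : ∀ g h : Γ, a (h * g * h⁻¹) = a g)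
    (hiii : Summable fun q : Γ ⧸ Z => Complex.normSq (a (Quotient.out q))) :
    ∀ g : Γ, g ∉ Z → a g = 0 :=
  icc_invariant_function_supported_on_center_general Z χ hICC a hi hii hiii
end

section
/- Let Γ' be a normal subgroup of Γ of finite index, Z' = Z ∩ Γ', and χ' the restriction of χ to Z'. Let N be the two-sided ideal of ℂ[Γ] generated by { z − χ(z)·1 : z ∈ Z } and N' the two-sided ideal of ℂ[Γ'] generated by { z − χ'(z)·1 : z ∈ Z' }. Then the ℂ-algebra homomorphism ℂ[Γ'] → ℂ[Γ]/N induced by the inclusion Γ' ⊆ Γ vanishes on N', hence induces a ℂ-algebra homomorphism φ : ℂ[Γ']/N' → ℂ[Γ]/N; moreover φ is injective, and for any set X ⊆ Γ of representatives of the cosets of the subgroup Γ'Z in Γ, the images of the elements of X in ℂ[Γ]/N form a basis of ℂ[Γ]/N as a left module over ℂ[Γ']/N' (with module structure given by φ). In particular ℂ[Γ]/N is a free left ℂ[Γ']/N'-module of rank [Γ : Γ'Z]. -/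
/-!
Modulo the ideal generated by the elements `z - χ z`, every `g * z` with `z ∈ Z` becomes
`χ z • g`, so `k[G]/N` is spanned by the classes of chosen coset representatives of `G/Z`.
They are linearly independent because reading off, coset by coset, the `χ`-twisted sum of
coefficients is a linear map that kills `N`: since the generators are central, it suffices that
it kills `x * (z - χ z)` for every `x`. The map `c ↦ ∑ φ (c x) * x` sends the resulting basis
of `⊕_X ℂ[Γ']/N'` to unit multiples of the basis of `ℂ[Γ]/N`, along `(x, hZ') ↦ hxZ` (`h ∈ Γ'`),
which is a bijection `X × Γ'/Z' → Γ/Z` because `X` is a transversal of `Γ'Z`. For a transversal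
through `1`, `φ` is the restriction of that bijection to the summand of `1`.
-/

theorem TwoSidedIdeal.map_eq_zero_of_mem_span {R M : Type*} [Ring R] [AddCommGroup M]
    (f : R →+ M) {s : Set R} (hs : ∀ x ∈ s, ∀ p q : R, f (p * x * q) = 0) {x : R}
    (hx : x ∈ TwoSidedIdeal.span s) : f x = 0 := by
  suffices ∀ p q : R, f (p * x * q) = 0 by simpa using this 1 1
  induction hx using TwoSidedIdeal.span_induction with
  | mem x hx => exact hs x hx
  | zero => simp
  | add x y _ _ hx hy => intro p q; rw [mul_add, add_mul, map_add, hx, hy, add_zero]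
  | neg x _ hx => intro p q; rw [mul_neg, neg_mul, map_neg, hx, neg_zero]
  | left_absorb a x _ hx => intro p q; simpa only [mul_assoc] using hx (p * a) q
  | right_absorb b x _ hx => intro p q; simpa only [mul_assoc] using hx p (b * q)

theorem TwoSidedIdeal.ringCon_mk'_eq_zero_iff {R : Type*} [Ring R] (I : TwoSidedIdeal R)
    {x : R} : I.ringCon.mk' x = 0 ↔ x ∈ I := by
  rw [← mem_ker, ker_ringCon_mk']

theorem LinearMap.bijective_of_map_basis_eq_units_smul {ι ι' R M M' : Type*} [Semiring R]
    [AddCommMonoid M] [Module R M] [AddCommMonoid M'] [Module R M'] (f : M →ₗ[R] M')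
    (b : Module.Basis ι R M) (b' : Module.Basis ι' R M') (e : ι ≃ ι')
    (h : ∀ i, ∃ u : Rˣ, f (b i) = u • b' (e i)) : Function.Bijective f := by
  choose u hu using h
  have : f = (b.equiv ((b'.reindex e.symm).unitsSMul u) (Equiv.refl ι)).toLinearMap :=
    b.ext fun i => by simp [hu, Module.Basis.unitsSMul_apply]
  exact this ▸ LinearEquiv.bijective _

namespace Subgroup

variable {G : Type*} [Group G] {Z : Subgroup G}

theorem comap_subtype_le_center (H : Subgroup G) (hZ : Z ≤ center G) :
    Z.comap H.subtype ≤ center H :=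
  fun _ hz => mem_center_iff.mpr fun h => Subtype.ext (mem_center_iff.mp (hZ hz) h)

theorem normal_of_le_center (hZ : Z ≤ center G) : Z.Normal :=
  ⟨fun n hn g => by rwa [mem_center_iff.mp (hZ hn) g, mul_inv_cancel_right]⟩

theorem isComplement_of_existsUnique_mul {K : Subgroup G} {X : Set G}
    (hX : ∀ g : G, ∃! x : X, ∃ u ∈ K, u * (x : G) = g) : IsComplement (K : Set G) X :=
  isComplement_iff_existsUnique_mul_inv_mem.mpr fun g => by
    simpa only [← eq_mul_inv_iff_mul_eq, exists_eq_right, SetLike.mem_coe] using hX g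

end Subgroup

namespace QuotientGroup

variable {G : Type*} [Group G] {Z : Subgroup G}

variable (Z) in
noncomputable def cosetOffset (g : G) : Z :=
  ⟨(g : G ⧸ Z).out⁻¹ * g, QuotientGroup.eq.mp (out_eq' (g : G ⧸ Z))⟩

theorem out_mul_cosetOffset (g : G) : (g : G ⧸ Z).out * (cosetOffset Z g : G) = g :=
  mul_inv_cancel_left _ g

theorem cosetOffset_mul (g : G) (z : Z) : cosetOffset Z (g * z) = cosetOffset Z g * z := by
  ext
  simp [cosetOffset, mk_mul_of_mem g z.2, mul_assoc]

theorem cosetOffset_out (q : G ⧸ Z) : cosetOffset Z q.out = 1 := by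
  ext
  simp [cosetOffset]

variable {H : Subgroup G}

theorem mk_coe_out_mk (y : H) :
    ((((y : H ⧸ Z.comap H.subtype).out : H) : G) : G ⧸ Z) = ((y : G) : G ⧸ Z) :=
  QuotientGroup.eq.mpr <| (QuotientGroup.eq (s := Z.comap H.subtype)).mp (out_eq' _)

theorem bijective_mk_out_mul (hZ : Z ≤ Subgroup.center G) {X : Set G}
    (hX : Subgroup.IsComplement ((H ⊔ Z : Subgroup G) : Set G) X) :
    Function.Bijective fun p : (Σ _ : X, H ⧸ Z.comap H.subtype) =>
      (((p.2.out : H) : G) * (p.1 : G) : G ⧸ Z) := by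
  have := Subgroup.normal_of_le_center hZ
  have hX' := Subgroup.isComplement_iff_existsUnique_mul_inv_mem.mp hX
  constructor
  · rintro ⟨x₁, q₁⟩ ⟨x₂, q₂⟩ h
    set h₁ : G := ((q₁.out : H) : G)
    set h₂ : G := ((q₂.out : H) : G)
    have hcoset : ((h₁ * x₁ * (x₂ : G)⁻¹ : G) : G ⧸ Z) = h₂ := by
      simpa only [mk_mul, mk_inv, mul_inv_eq_iff_eq_mul] using h
    obtain rfl : x₁ = x₂ := by
      refine (hX' (h₁ * x₁)).unique ?_ ?_
      · rw [SetLike.mem_coe, mul_inv_cancel_right]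
        exact Subgroup.mem_sup_left q₁.out.2
      · rw [SetLike.mem_coe, ← mul_inv_cancel_left h₂ (h₁ * x₁ * (x₂ : G)⁻¹)]
        exact Subgroup.mul_mem_sup q₂.out.2 (QuotientGroup.eq.mp hcoset.symm)
    have hh : (h₁ : G ⧸ Z) = h₂ := by
      simpa only [mk_mul, mul_left_inj] using h
    have hq : (q₁.out : H ⧸ Z.comap H.subtype) = q₂.out :=
      QuotientGroup.eq.mpr ((QuotientGroup.eq (s := Z)).mp hh)
    rw [out_eq', out_eq'] at hq
    rw [hq]
  · intro q
    induction q using QuotientGroup.induction_on with | H g => ?_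
    obtain ⟨x, hx, -⟩ := hX' g
    obtain ⟨h, hh, z, hz, hgx⟩ := Subgroup.mem_sup_of_normal_right.mp hx
    refine ⟨⟨x, ((⟨h, hh⟩ : H) : H ⧸ Z.comap H.subtype)⟩, ?_⟩
    rw [← inv_mul_cancel_right g x, ← hgx]
    simp only [mk_mul, mk_coe_out_mk, (eq_one_iff z).mpr hz, mul_one]

end QuotientGroup

namespace MonoidAlgebra

open QuotientGroup

noncomputable section

variable {k G : Type*} [CommRing k] [Group G] {Z : Subgroup G}

def twistedIdeal (χ : Z →* kˣ) : TwoSidedIdeal (MonoidAlgebra k G) :=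
  TwoSidedIdeal.span {y | ∃ z : Z, y = of k G z - (χ z : k) • 1}

/-- The coordinates of `x` modulo `twistedIdeal χ`, in the basis of the classes of the
representatives `q.out`. -/
def twistedCoeff (χ : Z →* kˣ) : MonoidAlgebra k G →ₗ[k] (G ⧸ Z →₀ k) :=
  (MonoidAlgebra.basis G k).constr k fun g => Finsupp.single (g : G ⧸ Z) (χ (cosetOffset Z g) : k)

variable (χ : Z →* kˣ)

theorem twistedCoeff_single (g : G) (a : k) :
    twistedCoeff χ (single g a) = Finsupp.single (g : G ⧸ Z) ((χ (cosetOffset Z g) : k) * a) := by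
  have : single g a = a • MonoidAlgebra.basis G k g := by
    rw [basis_apply, smul_single, smul_eq_mul, mul_one]
  rw [this, map_smul, twistedCoeff, Module.Basis.constr_basis, Finsupp.smul_single, smul_eq_mul,
    mul_comm]

theorem twistedCoeff_of_out (q : G ⧸ Z) :
    twistedCoeff χ (of k G q.out) = Finsupp.single q 1 := by
  rw [of_apply, twistedCoeff_single, cosetOffset_out, out_eq', map_one, Units.val_one, mul_one]

theorem twistedCoeff_mul_of_sub (x : MonoidAlgebra k G) (z : Z) :
    twistedCoeff χ (x * (of k G z - (χ z : k) • 1)) = 0 := by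
  have : twistedCoeff χ ∘ₗ LinearMap.mulRight k (of k G z - (χ z : k) • 1) = 0 := by
    refine (MonoidAlgebra.basis G k).ext fun g => ?_
    simp [basis_apply, mul_sub, twistedCoeff_single, cosetOffset_mul]
  exact LinearMap.congr_fun this x

theorem twistedCoeff_eq_zero_of_mem (hZ : Z ≤ Subgroup.center G) {x : MonoidAlgebra k G}
    (hx : x ∈ twistedIdeal χ) : twistedCoeff χ x = 0 := by
  refine TwoSidedIdeal.map_eq_zero_of_mem_span (twistedCoeff χ).toAddMonoidHom ?_ hx
  rintro _ ⟨z, rfl⟩ p q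
  have hcomm : Commute (of k G z - (χ z : k) • 1) q :=
    (of_commute (fun g => (Subgroup.mem_center_iff.mp (hZ z.2) g).symm) q).sub_left
      ((Commute.one_left q).smul_left _)
  rw [mul_assoc, hcomm.eq, ← mul_assoc]
  exact twistedCoeff_mul_of_sub χ (p * q) z

theorem mk'_of_mul_eq_smul (g : G) (z : Z) :
    (twistedIdeal χ).ringCon.mk' (of k G (g * z)) =
      (χ z : k) • (twistedIdeal χ).ringCon.mk' (of k G g) := by
  have hsub : of k G (g * z) - (χ z : k) • of k G g = of k G g * (of k G z - (χ z : k) • 1) := by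
    rw [mul_sub, mul_smul_comm, mul_one, map_mul]
  rw [← sub_eq_zero, RingCon.coe_mk', ← RingCon.coe_smul, ← RingCon.coe_sub, ← RingCon.coe_mk',
    TwoSidedIdeal.ringCon_mk'_eq_zero_iff, hsub]
  exact TwoSidedIdeal.mul_mem_left _ _ _ (TwoSidedIdeal.subset_span ⟨z, rfl⟩)

theorem mk'_of_eq_smul_mk'_of_out (g : G) :
    (twistedIdeal χ).ringCon.mk' (of k G g) =
      (χ (cosetOffset Z g) : k) • (twistedIdeal χ).ringCon.mk' (of k G (g : G ⧸ Z).out) := by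
  conv_lhs => rw [← out_mul_cosetOffset (Z := Z) g]
  exact mk'_of_mul_eq_smul χ _ _

theorem linearIndependent_mk'_of_out (hZ : Z ≤ Subgroup.center G) :
    LinearIndependent k fun q : G ⧸ Z => (twistedIdeal χ).ringCon.mk' (of k G q.out) := by
  rw [linearIndependent_iff]
  intro l hl
  have hx : Finsupp.linearCombination k (fun q : G ⧸ Z => of k G q.out) l ∈ twistedIdeal χ := by
    rw [← TwoSidedIdeal.ringCon_mk'_eq_zero_iff, ← hl]
    exact Finsupp.apply_linearCombination k ((twistedIdeal χ).ringCon.mkₐ k).toLinearMap _ l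
  have := twistedCoeff_eq_zero_of_mem χ hZ hx
  rwa [Finsupp.apply_linearCombination, Function.comp_def, funext (twistedCoeff_of_out χ),
    Finsupp.linearCombination_apply, Finsupp.sum_congr fun q _ => Finsupp.smul_single_one q _,
    Finsupp.sum_single] at this

def twistedBasis (hZ : Z ≤ Subgroup.center G) :
    Module.Basis (G ⧸ Z) k (twistedIdeal χ).ringCon.Quotient :=
  .mk (linearIndependent_mk'_of_out χ hZ) <| by
    rintro y -
    obtain ⟨x, rfl⟩ := RingCon.mkₐ_surjective (α := k) _ y
    induction x using MonoidAlgebra.induction_on with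
    | of g =>
      rw [RingCon.mkₐ_apply, ← RingCon.coe_mk', mk'_of_eq_smul_mk'_of_out]
      exact Submodule.smul_mem _ _ (Submodule.subset_span ⟨_, rfl⟩)
    | add x y hx hy => rw [map_add]; exact add_mem hx hy
    | smul c x hx => rw [map_smul]; exact Submodule.smul_mem _ _ hx

theorem twistedBasis_apply (hZ : Z ≤ Subgroup.center G) (q : G ⧸ Z) :
    twistedBasis χ hZ q = (twistedIdeal χ).ringCon.mk' (of k G q.out) :=
  congrFun (Module.Basis.coe_mk _ _) q

theorem mk'_of_eq_smul_twistedBasis (hZ : Z ≤ Subgroup.center G) (g : G) :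
    (twistedIdeal χ).ringCon.mk' (of k G g) = (χ (cosetOffset Z g) : k) • twistedBasis χ hZ g := by
  rw [twistedBasis_apply, mk'_of_eq_smul_mk'_of_out]

theorem mapDomainRingHom_mem_twistedIdeal {H : Type*} [Group H] (f : H →* G)
    {y : MonoidAlgebra k H} (hy : y ∈ twistedIdeal (χ.comp (f.subgroupComap Z))) :
    mapDomainRingHom k f y ∈ twistedIdeal χ := by
  suffices twistedIdeal (χ.comp (f.subgroupComap Z)) ≤
      TwoSidedIdeal.comap (mapDomainRingHom k f) (twistedIdeal χ) from this hy
  refine TwoSidedIdeal.span_le.mpr ?_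
  rintro _ ⟨z, rfl⟩
  refine (TwoSidedIdeal.mem_comap _).mpr (TwoSidedIdeal.subset_span ⟨f.subgroupComap Z z, ?_⟩)
  rw [Algebra.smul_def, mul_one, Algebra.smul_def, mul_one, map_sub]
  exact congrArg₂ _ (mapDomain_single ..) ((mapDomainAlgHom k k f).commutes _)

theorem bijective_sum_mul_mk'_of (hZ : Z ≤ Subgroup.center G) (H : Subgroup G) {X : Set G}
    (hX : Subgroup.IsComplement ((H ⊔ Z : Subgroup G) : Set G) X)
    (φ : (twistedIdeal (χ.comp (H.subtype.subgroupComap Z))).ringCon.Quotient →+*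
      (twistedIdeal χ).ringCon.Quotient)
    (hφ : ∀ y, φ ((twistedIdeal (χ.comp (H.subtype.subgroupComap Z))).ringCon.mk' y) =
      (twistedIdeal χ).ringCon.mk' (mapDomainRingHom k H.subtype y)) :
    Function.Bijective
      fun c : X →₀ (twistedIdeal (χ.comp (H.subtype.subgroupComap Z))).ringCon.Quotient =>
        c.sum fun x a => φ a * (twistedIdeal χ).ringCon.mk' (of k G x) := by
  have hφ_smul (c : k) a : φ (c • a) = c • φ a := by
    obtain ⟨y, rfl⟩ := RingCon.mk'_surjective _ a
    rw [RingCon.coe_mk', ← RingCon.coe_smul, ← RingCon.coe_mk', hφ, hφ, mapDomainRingHom_apply,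
      mapDomainRingHom_apply, mapDomain_smul, RingCon.coe_mk', RingCon.coe_smul]
  let φₗ : _ →ₗ[k] (twistedIdeal χ).ringCon.Quotient :=
    { toFun := φ, map_add' := map_add φ, map_smul' := hφ_smul }
  let F := Finsupp.lsum k fun x : X =>
    LinearMap.mulRight k ((twistedIdeal χ).ringCon.mk' (of k G x)) ∘ₗ φₗ
  change Function.Bijective F
  refine LinearMap.bijective_of_map_basis_eq_units_smul F
    (Finsupp.basis fun _ => twistedBasis _ (Subgroup.comap_subtype_le_center H hZ))
    (twistedBasis χ hZ) (Equiv.ofBijective _ (bijective_mk_out_mul hZ hX))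
    fun ⟨x, q⟩ => ⟨χ (cosetOffset Z ((q.out : H) * (x : G))), ?_⟩
  rw [Finsupp.coe_basis, Finsupp.lsum_single, LinearMap.comp_apply, LinearMap.mulRight_apply]
  change φ _ * _ = _
  rw [twistedBasis_apply, hφ, mapDomainRingHom_apply, of_apply, mapDomain_single, ← of_apply,
    ← map_mul, ← map_mul, mk'_of_eq_smul_twistedBasis χ hZ, Equiv.ofBijective_apply,
    Units.smul_def]
  rfl

end

end MonoidAlgebra

theorem crossed_product_decomposition_general {Γ : Type*} [Group Γ] (Z : Subgroup Γ)
    (hZ : Z ≤ Subgroup.center Γ) (χ : Z →* ℂˣ)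
    (Γ' : Subgroup Γ)
    (N : TwoSidedIdeal (MonoidAlgebra ℂ Γ))
    (hN : N = TwoSidedIdeal.span
      {y : MonoidAlgebra ℂ Γ | ∃ z : Z, y = MonoidAlgebra.of ℂ Γ (z : Γ) - (χ z : ℂ) • 1})
    (N' : TwoSidedIdeal (MonoidAlgebra ℂ ↥Γ'))
    (hN' : N' = TwoSidedIdeal.span
      {y : MonoidAlgebra ℂ ↥Γ' | ∃ (z : ↥Γ') (hz : (z : Γ) ∈ Z),
        y = MonoidAlgebra.of ℂ ↥Γ' z - (χ ⟨(z : Γ), hz⟩ : ℂ) • 1})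
    (ψ : MonoidAlgebra ℂ ↥Γ' →+* N.ringCon.Quotient)
    (hψ : ψ = (N.ringCon.mk').comp (MonoidAlgebra.mapDomainRingHom ℂ Γ'.subtype)) :
    (∀ y ∈ N', ψ y = 0) ∧
    ∀ φ : N'.ringCon.Quotient →+* N.ringCon.Quotient,
      (∀ y : MonoidAlgebra ℂ ↥Γ', φ (N'.ringCon.mk' y) = ψ y) →
      Function.Injective φ ∧
      ∀ X : Set Γ,
        (∀ g : Γ, ∃! x : X, ∃ u ∈ (Γ' ⊔ Z : Subgroup Γ), u * (x : Γ) = g) →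
        Function.Bijective (fun c : X →₀ N'.ringCon.Quotient =>
          c.sum fun x a => φ a * N.ringCon.mk' (MonoidAlgebra.of ℂ Γ (x : Γ))) := by
  obtain rfl : N = MonoidAlgebra.twistedIdeal χ := hN
  obtain rfl : N' = MonoidAlgebra.twistedIdeal (χ.comp (Γ'.subtype.subgroupComap Z)) := by
    rw [hN', MonoidAlgebra.twistedIdeal]
    congr 1
    ext y
    exact ⟨fun ⟨z, hz, hy⟩ => ⟨⟨z, hz⟩, hy⟩, fun ⟨z, hy⟩ => ⟨z, z.2, hy⟩⟩
  subst hψ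
  refine ⟨fun y hy => (TwoSidedIdeal.ringCon_mk'_eq_zero_iff _).mpr
    (MonoidAlgebra.mapDomainRingHom_mem_twistedIdeal χ _ hy), fun φ hφ => ?_⟩
  have hbij {X : Set Γ} (hX : Subgroup.IsComplement ((Γ' ⊔ Z : Subgroup Γ) : Set Γ) X) :=
    MonoidAlgebra.bijective_sum_mul_mk'_of χ hZ Γ' hX φ hφ
  refine ⟨?_, fun X hX => hbij (Subgroup.isComplement_of_existsUnique_mul hX)⟩
  obtain ⟨X, hX, h1⟩ := Subgroup.exists_isComplement_right (Γ' ⊔ Z) 1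
  intro a b hab
  refine Finsupp.single_injective (⟨1, h1⟩ : X) ((hbij hX).1 ?_)
  dsimp only
  rwa [Finsupp.sum_single_index (by rw [map_zero, zero_mul]),
    Finsupp.sum_single_index (by rw [map_zero, zero_mul]), map_one, map_one, mul_one, mul_one]

/-- Let `Γ'` be a normal subgroup of `Γ` of finite index, `Z' = Z ∩ Γ'`, and
`χ'` the restriction of `χ` to `Z'`.  Let `N ⊆ ℂ[Γ]` and `N' ⊆ ℂ[Γ']` be the two-sided
ideals generated by `{ z − χ(z)·1 : z ∈ Z }` and `{ z − χ'(z)·1 : z ∈ Z' }` respectively.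
Then the ring homomorphism `ℂ[Γ'] → ℂ[Γ]/N` induced by the inclusion `Γ' ⊆ Γ` vanishes on
`N'`, hence induces `φ : ℂ[Γ']/N' → ℂ[Γ]/N`; moreover `φ` is injective, and for any set
`X ⊆ Γ` of representatives of the cosets of `Γ'Z` in `Γ`, the images of the elements of `X`
in `ℂ[Γ]/N` form a basis of `ℂ[Γ]/N` as a left `ℂ[Γ']/N'`-module (via `φ`); in particular
`ℂ[Γ]/N` is a free left `ℂ[Γ']/N'`-module of rank `[Γ : Γ'Z]`. -/
theorem crossed_product_decomposition {Γ : Type*} [Group Γ] (Z : Subgroup Γ)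
    (hZ : Z ≤ Subgroup.center Γ) [Fintype Z] (χ : Z →* ℂˣ)
    (Γ' : Subgroup Γ) [Γ'.Normal] [Γ'.FiniteIndex]
    (N : TwoSidedIdeal (MonoidAlgebra ℂ Γ))
    (hN : N = TwoSidedIdeal.span
      {y : MonoidAlgebra ℂ Γ | ∃ z : Z, y = MonoidAlgebra.of ℂ Γ (z : Γ) - (χ z : ℂ) • 1})
    (N' : TwoSidedIdeal (MonoidAlgebra ℂ ↥Γ'))
    (hN' : N' = TwoSidedIdeal.span
      {y : MonoidAlgebra ℂ ↥Γ' | ∃ (z : ↥Γ') (hz : (z : Γ) ∈ Z),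
        y = MonoidAlgebra.of ℂ ↥Γ' z - (χ ⟨(z : Γ), hz⟩ : ℂ) • 1})
    (ψ : MonoidAlgebra ℂ ↥Γ' →+* N.ringCon.Quotient)
    (hψ : ψ = (N.ringCon.mk').comp (MonoidAlgebra.mapDomainRingHom ℂ Γ'.subtype)) :
    (∀ y ∈ N', ψ y = 0) ∧
    ∀ φ : N'.ringCon.Quotient →+* N.ringCon.Quotient,
      (∀ y : MonoidAlgebra ℂ ↥Γ', φ (N'.ringCon.mk' y) = ψ y) →
      Function.Injective φ ∧
      ∀ X : Set Γ,
        (∀ g : Γ, ∃! x : X, ∃ u ∈ (Γ' ⊔ Z : Subgroup Γ), u * (x : Γ) = g) →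
        Function.Bijective (fun c : X →₀ N'.ringCon.Quotient =>
          c.sum fun x a => φ a * N.ringCon.mk' (MonoidAlgebra.of ℂ Γ (x : Γ))) :=
  crossed_product_decomposition_general Z hZ χ Γ' N hN N' hN' ψ hψ
end
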